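/- arXiv:1506.07199 — 3 statements merged into one kernel-verified Lean document; each statement's English description precedes it below -/
import Mathlib

section
/- Let f and g be integrable, radially symmetric, nonincreasing (rearranged) functions on a ball B_R(0) in R^N with f less concentrated than g (i.e. for all r ≤ R, the integral of f over B_r(0) is at most that of g). Then for every convex nondecreasing function Φ:[0,∞)→[0,∞) with Φ(0)=0, the integral of Φ∘f over B_R(0) is at most the integral of Φ∘g over B_R(0). -/
open MeasureTheory Set Metric ENNReal

/-- An element of the subdifferential of a convex function: the infimum of right slopes. -/
noncomputable def subg (Φ : ℝ → ℝ) (a : ℝ) : ℝ :=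
  sInf ((fun b => (Φ b - Φ a) / (b - a)) '' Ioi a)

section subgLemmas

variable {Φ : ℝ → ℝ}

lemma subg_slope_nonneg (hmono : MonotoneOn Φ (Ici 0)) {a b : ℝ} (ha : 0 ≤ a) (hab : a < b) :
    0 ≤ (Φ b - Φ a) / (b - a) :=
  div_nonneg (sub_nonneg.2 (hmono ha (ha.trans hab.le) hab.le)) (sub_nonneg.2 hab.le)

lemma subg_bddBelow (hmono : MonotoneOn Φ (Ici 0)) {a : ℝ} (ha : 0 ≤ a) :
    BddBelow ((fun b => (Φ b - Φ a) / (b - a)) '' Ioi a) := by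
  refine ⟨0, ?_⟩
  rintro _ ⟨b, hb, rfl⟩
  exact subg_slope_nonneg hmono ha hb

lemma subg_nonneg (hmono : MonotoneOn Φ (Ici 0)) {a : ℝ} (ha : 0 ≤ a) : 0 ≤ subg Φ a := by
  refine le_csInf (Nonempty.image _ (nonempty_Ioi)) ?_
  rintro _ ⟨b, hb, rfl⟩
  exact subg_slope_nonneg hmono ha hb

lemma subg_le_slope (hmono : MonotoneOn Φ (Ici 0)) {a b : ℝ} (ha : 0 ≤ a) (hab : a < b) :
    subg Φ a ≤ (Φ b - Φ a) / (b - a) :=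
  csInf_le (subg_bddBelow hmono ha) (mem_image_of_mem _ hab)

lemma slope_le_subg (hconv : ConvexOn ℝ (Ici 0) Φ) {a b : ℝ} (hb : 0 ≤ b) (hba : b < a) :
    (Φ a - Φ b) / (a - b) ≤ subg Φ a := by
  refine le_csInf (Nonempty.image _ (nonempty_Ioi)) ?_
  rintro _ ⟨c, hc, rfl⟩
  exact hconv.slope_mono_adjacent hb ((hb.trans hba.le).trans (le_of_lt hc)) hba hc

lemma subg_mono (hconv : ConvexOn ℝ (Ici 0) Φ) (hmono : MonotoneOn Φ (Ici 0)) :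
    MonotoneOn (subg Φ) (Ici 0) := by
  intro a ha b hb hab
  rcases eq_or_lt_of_le hab with rfl | h
  · exact le_rfl
  · exact (subg_le_slope hmono ha h).trans (slope_le_subg hconv ha h)

lemma subg_grad (hconv : ConvexOn ℝ (Ici 0) Φ) (hmono : MonotoneOn Φ (Ici 0))
    {a b : ℝ} (ha : 0 ≤ a) (hb : 0 ≤ b) : Φ a + subg Φ a * (b - a) ≤ Φ b := by
  rcases lt_trichotomy a b with h | rfl | h
  · have h1 := subg_le_slope hmono ha h
    have h2 := (le_div_iff₀ (by linarith : (0:ℝ) < b - a)).1 h1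
    linarith
  · simp
  · have h1 := slope_le_subg hconv hb h
    have h2 := (div_le_iff₀ (by linarith : (0:ℝ) < a - b)).1 h1
    linarith

end subgLemmas

/-- If `f` and `g` are integrable rearranged (nonnegative, radial,
nonincreasing, right-continuous profile) functions on the ball `B_R(0) ⊂ ℝ^N`
with `f` less concentrated than `g`, then for every convex nondecreasing
`Φ : [0,∞) → [0,∞)` with `Φ 0 = 0` one has
`∫_{B_R} Φ∘f ≤ ∫_{B_R} Φ∘g`. -/
theorem stmt0 (N : ℕ) (R : ℝ) (hR : 0 < R)
    (f g : EuclideanSpace ℝ (Fin N) → ℝ) (φf φg : ℝ → ℝ)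
    (hfrad : ∀ x, f x = φf ‖x‖) (hgrad : ∀ x, g x = φg ‖x‖)
    (hφf0 : ∀ r, 0 ≤ r → 0 ≤ φf r) (hφg0 : ∀ r, 0 ≤ r → 0 ≤ φg r)
    (hφfmono : AntitoneOn φf (Ici 0)) (hφgmono : AntitoneOn φg (Ici 0))
    (hφfrc : ∀ r, 0 ≤ r → ContinuousWithinAt φf (Ici r) r)
    (hφgrc : ∀ r, 0 ≤ r → ContinuousWithinAt φg (Ici r) r)
    (hfi : IntegrableOn f (ball 0 R)) (hgi : IntegrableOn g (ball 0 R))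
    (hconc : ∀ r, 0 < r → r ≤ R →
      (∫ x in ball (0 : EuclideanSpace ℝ (Fin N)) r, f x) ≤
        ∫ x in ball (0 : EuclideanSpace ℝ (Fin N)) r, g x)
    (Φ : ℝ → ℝ) (hΦconv : ConvexOn ℝ (Ici 0) Φ) (hΦmono : MonotoneOn Φ (Ici 0))
    (hΦnonneg : ∀ t, 0 ≤ t → 0 ≤ Φ t) (hΦ0 : Φ 0 = 0)
    (hΦf : IntegrableOn (fun x => Φ (f x)) (ball 0 R))
    (hΦg : IntegrableOn (fun x => Φ (g x)) (ball 0 R)) :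
    (∫ x in ball (0 : EuclideanSpace ℝ (Fin N)) R, Φ (f x)) ≤
      ∫ x in ball (0 : EuclideanSpace ℝ (Fin N)) R, Φ (g x) := by
  classical
  have hf_nonneg : ∀ x, 0 ≤ f x := fun x => (hfrad x) ▸ hφf0 _ (norm_nonneg x)
  have hg_nonneg : ∀ x, 0 ≤ g x := fun x => (hgrad x) ▸ hφg0 _ (norm_nonneg x)
  by_cases hN : N = 0
  · -- degenerate zero-dimensional case
    subst hN
    haveI hss : Subsingleton (EuclideanSpace ℝ (Fin 0)) :=
      ⟨fun a b => PiLp.ext fun i => i.elim0⟩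
    haveI huniq : Unique (EuclideanSpace ℝ (Fin 0)) := uniqueOfSubsingleton 0
    have hball : ball (0 : EuclideanSpace ℝ (Fin 0)) R = univ :=
      eq_univ_of_forall fun x => (Subsingleton.elim (0 : EuclideanSpace ℝ (Fin 0)) x) ▸
        mem_ball_self hR
    set c : ℝ := (volume (univ : Set (EuclideanSpace ℝ (Fin 0)))).toReal with hc
    have hcpos : 0 < c := by
      refine ENNReal.toReal_pos ?_ ?_
      · exact (isOpen_univ.measure_pos volume univ_nonempty).ne'
      · rw [← hball]; exact measure_ball_lt_top.ne
    have hint : ∀ F : EuclideanSpace ℝ (Fin 0) → ℝ,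
        (∫ x in ball (0 : EuclideanSpace ℝ (Fin 0)) R, F x) = c * F default := by
      intro F
      rw [hball, Measure.restrict_univ, integral_unique, smul_eq_mul, hc]
      exact congrArg (fun y => (volume (univ : Set (EuclideanSpace ℝ (Fin 0)))).toReal * F y)
        (Subsingleton.elim _ _)
    have hfg : f default ≤ g default := by
      have := hconc R hR le_rfl
      rw [hint f, hint g] at this
      exact le_of_mul_le_mul_left this hcpos
    rw [hint (fun x => Φ (f x)), hint (fun x => Φ (g x))]
    have := hΦmono (hf_nonneg default) (hg_nonneg default) hfg
    exact mul_le_mul_of_nonneg_left this hcpos.le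
  · -- main case N ≥ 1
    haveI hNont : Nontrivial (EuclideanSpace ℝ (Fin N)) := by
      apply Module.finrank_pos_iff (R := ℝ) |>.mp
      rw [finrank_euclideanSpace_fin]
      omega
    -- measurable versions of f, g
    have hf_eq : f = fun x => φf (max ‖x‖ 0) :=
      funext fun x => by rw [hfrad, max_eq_left (norm_nonneg x)]
    have hg_eq : g = fun x => φg (max ‖x‖ 0) :=
      funext fun x => by rw [hgrad, max_eq_left (norm_nonneg x)]
    have hφf'_anti : Antitone (fun r : ℝ => φf (max r 0)) := fun r s hrs =>
      hφfmono (le_max_right r 0) (le_max_right s 0) (max_le_max hrs le_rfl)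
    have hφg'_anti : Antitone (fun r : ℝ => φg (max r 0)) := fun r s hrs =>
      hφgmono (le_max_right r 0) (le_max_right s 0) (max_le_max hrs le_rfl)
    have hfm : Measurable f := by
      rw [hf_eq]; exact hφf'_anti.measurable.comp measurable_norm
    have hgm : Measurable g := by
      rw [hg_eq]; exact hφg'_anti.measurable.comp measurable_norm
    -- the weight w
    set w : EuclideanSpace ℝ (Fin N) → ℝ := fun x => subg Φ (max (f x) 0) with hw
    have hw_eq : ∀ x, w x = subg Φ (f x) := fun x => by
      rw [hw]; simp only []; rw [max_eq_left (hf_nonneg x)]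
    have hH'_mono : Monotone (fun t : ℝ => subg Φ (max t 0)) := fun t s hts =>
      subg_mono hΦconv hΦmono (le_max_right t 0) (le_max_right s 0) (max_le_max hts le_rfl)
    have hw_meas : Measurable w := hH'_mono.measurable.comp hfm
    have hw_nn : ∀ x, 0 ≤ w x := fun x => by
      rw [hw_eq x]; exact subg_nonneg hΦmono (hf_nonneg x)
    set C : ℝ := subg Φ (φf 0) with hC
    have hw_bd : ∀ x, w x ≤ C := by
      intro x
      rw [hw_eq x, hC]
      refine subg_mono hΦconv hΦmono (hf_nonneg x) (hφf0 0 le_rfl) ?_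
      rw [hfrad x]
      exact hφfmono self_mem_Ici (norm_nonneg x) (norm_nonneg x)
    -- integrability of w * f, w * g
    have hw_bound : ∃ Cb : ℝ, ∀ x, ‖w x‖ ≤ Cb := by
      refine ⟨C, fun x => ?_⟩
      rw [Real.norm_eq_abs, abs_of_nonneg (hw_nn x)]
      exact hw_bd x
    have hwf : IntegrableOn (fun x => w x * f x) (ball 0 R) :=
      hfi.bdd_mul hw_meas.aestronglyMeasurable (ae_of_all _ hw_bound.choose_spec)
    have hwg : IntegrableOn (fun x => w x * g x) (ball 0 R) :=
      hgi.bdd_mul hw_meas.aestronglyMeasurable (ae_of_all _ hw_bound.choose_spec)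
    -- key inequality : ∫ w f ≤ ∫ w g on the ball
    have hkey : (∫ x in ball (0 : EuclideanSpace ℝ (Fin N)) R, w x * f x) ≤
        ∫ x in ball (0 : EuclideanSpace ℝ (Fin N)) R, w x * g x := by
      set fE : EuclideanSpace ℝ (Fin N) → ℝ≥0∞ := fun x => ENNReal.ofReal (f x) with hfE
      set gE : EuclideanSpace ℝ (Fin N) → ℝ≥0∞ := fun x => ENNReal.ofReal (g x) with hgE
      have hfEm : Measurable fE := ENNReal.measurable_ofReal.comp hfm
      have hgEm : Measurable gE := ENNReal.measurable_ofReal.comp hgm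
      set μ : Measure (EuclideanSpace ℝ (Fin N)) :=
        volume.restrict (ball (0 : EuclideanSpace ℝ (Fin N)) R) with hμ
      set νf := μ.withDensity fE with hνf
      set νg := μ.withDensity gE with hνg
      have hwE : Measurable fun x => ENNReal.ofReal (w x) :=
        ENNReal.measurable_ofReal.comp hw_meas
      -- the measure comparison at each level t
      have hmeas_cmp : ∀ t : ℝ, νf {x | t < w x} ≤ νg {x | t < w x} := by
        intro t
        have hAm : MeasurableSet {x | t < w x} := measurableSet_lt measurable_const hw_meas
        -- radial profile of w
        set ψ : ℝ → ℝ := fun r => subg Φ (max (φf (max r 0)) 0) with hψ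
        have hwψ : ∀ x, w x = ψ ‖x‖ := by
          intro x
          rw [hw_eq x, hψ, hfrad x]
          simp only []
          rw [max_eq_left (norm_nonneg x), max_eq_left (hφf0 _ (norm_nonneg x))]
        have hψanti : Antitone ψ := fun r s hrs =>
          hH'_mono (hφf'_anti hrs)
        set S : Set ℝ := {r | 0 ≤ r ∧ r < R ∧ t < ψ r} with hS
        have hbddS : BddAbove (insert 0 S) := by
          refine ⟨R, ?_⟩
          rintro r (rfl | hr)
          · exact hR.le
          · exact hr.2.1.le
        set ρ : ℝ := sSup (insert 0 S) with hρ
        have hρ0 : 0 ≤ ρ := le_csSup hbddS (mem_insert 0 S)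
        have hρR : ρ ≤ R := by
          refine csSup_le (insert_nonempty _ _) ?_
          rintro r (rfl | hr)
          · exact hR.le
          · exact hr.2.1.le
        set A : Set (EuclideanSpace ℝ (Fin N)) :=
          {x | t < w x} ∩ ball 0 R with hA
        have hA1 : ball (0 : EuclideanSpace ℝ (Fin N)) ρ ⊆ A := by
          intro x hx
          rw [mem_ball_zero_iff] at hx
          obtain ⟨r, hrmem, hxr⟩ := exists_lt_of_lt_csSup (insert_nonempty 0 S) hx
          rcases hrmem with rfl | hr
          · exact absurd hxr (not_lt.2 (norm_nonneg x))
          · constructor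
            · show t < w x
              rw [hwψ x]
              exact lt_of_lt_of_le hr.2.2 (hψanti hxr.le)
            · rw [mem_ball_zero_iff]
              exact hxr.trans hr.2.1
        have hA2 : A ⊆ closedBall (0 : EuclideanSpace ℝ (Fin N)) ρ := by
          rintro x ⟨hx1, hx2⟩
          rw [mem_ball_zero_iff] at hx2
          rw [mem_closedBall_zero_iff]
          refine le_csSup hbddS (mem_insert_of_mem _ ?_)
          refine ⟨norm_nonneg x, hx2, ?_⟩
          rw [← hwψ x]
          exact hx1
        have hAae : A =ᵐ[volume] ball (0 : EuclideanSpace ℝ (Fin N)) ρ := by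
          rw [MeasureTheory.ae_eq_set]
          constructor
          · refine measure_mono_null ?_
              (Measure.addHaar_sphere (μ := volume) (0 : EuclideanSpace ℝ (Fin N)) ρ)
            rw [← closedBall_diff_ball]
            exact diff_subset_diff_left hA2
          · rw [diff_eq_empty.2 hA1]
            exact measure_empty
        have hcmp_ball :
            (∫⁻ x in ball (0 : EuclideanSpace ℝ (Fin N)) ρ, fE x) ≤
              ∫⁻ x in ball (0 : EuclideanSpace ℝ (Fin N)) ρ, gE x := by
          rcases eq_or_lt_of_le hρ0 with h0 | hρpos
          · rw [← h0, ball_zero]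
            simp
          · have hfint : IntegrableOn f (ball (0 : EuclideanSpace ℝ (Fin N)) ρ) :=
              hfi.mono_set (ball_subset_ball hρR)
            have hgint : IntegrableOn g (ball (0 : EuclideanSpace ℝ (Fin N)) ρ) :=
              hgi.mono_set (ball_subset_ball hρR)
            rw [← ofReal_integral_eq_lintegral_ofReal hfint (ae_of_all _ hf_nonneg),
              ← ofReal_integral_eq_lintegral_ofReal hgint (ae_of_all _ hg_nonneg)]
            exact ENNReal.ofReal_le_ofReal (hconc ρ hρpos hρR)
        calc νf {x | t < w x} = ∫⁻ x in {x | t < w x}, fE x ∂μ := withDensity_apply _ hAm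
          _ = ∫⁻ x in A, fE x := by rw [hμ, Measure.restrict_restrict hAm]
          _ = ∫⁻ x in ball (0 : EuclideanSpace ℝ (Fin N)) ρ, fE x := setLIntegral_congr hAae
          _ ≤ ∫⁻ x in ball (0 : EuclideanSpace ℝ (Fin N)) ρ, gE x := hcmp_ball
          _ = ∫⁻ x in A, gE x := (setLIntegral_congr hAae).symm
          _ = ∫⁻ x in {x | t < w x}, gE x ∂μ := by rw [hμ, Measure.restrict_restrict hAm]
          _ = νg {x | t < w x} := (withDensity_apply _ hAm).symm
      -- layer cake
      have hlayer : (∫⁻ x, ENNReal.ofReal (w x) ∂νf) ≤ ∫⁻ x, ENNReal.ofReal (w x) ∂νg := by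
        rw [lintegral_eq_lintegral_meas_lt νf (ae_of_all _ hw_nn) hw_meas.aemeasurable,
          lintegral_eq_lintegral_meas_lt νg (ae_of_all _ hw_nn) hw_meas.aemeasurable]
        exact lintegral_mono fun t => hmeas_cmp t
      have hwd_f : (∫⁻ x, ENNReal.ofReal (w x) ∂νf) = ∫⁻ x, ENNReal.ofReal (w x * f x) ∂μ := by
        rw [hνf, lintegral_withDensity_eq_lintegral_mul μ hfEm hwE]
        refine lintegral_congr fun x => ?_
        simp only [Pi.mul_apply, hfE]
        rw [← ENNReal.ofReal_mul (hf_nonneg x), mul_comm (f x) (w x)]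
      have hwd_g : (∫⁻ x, ENNReal.ofReal (w x) ∂νg) = ∫⁻ x, ENNReal.ofReal (w x * g x) ∂μ := by
        rw [hνg, lintegral_withDensity_eq_lintegral_mul μ hgEm hwE]
        refine lintegral_congr fun x => ?_
        simp only [Pi.mul_apply, hgE]
        rw [← ENNReal.ofReal_mul (hg_nonneg x), mul_comm (g x) (w x)]
      have hof : ENNReal.ofReal (∫ x in ball (0 : EuclideanSpace ℝ (Fin N)) R, w x * f x) ≤
          ENNReal.ofReal (∫ x in ball (0 : EuclideanSpace ℝ (Fin N)) R, w x * g x) := by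
        rw [ofReal_integral_eq_lintegral_ofReal hwf
            (ae_of_all _ fun x => mul_nonneg (hw_nn x) (hf_nonneg x)),
          ofReal_integral_eq_lintegral_ofReal hwg
            (ae_of_all _ fun x => mul_nonneg (hw_nn x) (hg_nonneg x))]
        calc (∫⁻ x, ENNReal.ofReal (w x * f x) ∂μ)
            = ∫⁻ x, ENNReal.ofReal (w x) ∂νf := hwd_f.symm
          _ ≤ ∫⁻ x, ENNReal.ofReal (w x) ∂νg := hlayer
          _ = ∫⁻ x, ENNReal.ofReal (w x * g x) ∂μ := hwd_g
      exact (ENNReal.ofReal_le_ofReal_iff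
        (integral_nonneg fun x => mul_nonneg (hw_nn x) (hg_nonneg x))).1 hof
    -- pointwise convexity inequality
    have hpt : ∀ x ∈ ball (0 : EuclideanSpace ℝ (Fin N)) R,
        Φ (f x) + (w x * g x - w x * f x) ≤ Φ (g x) := by
      intro x _
      have h1 := subg_grad hΦconv hΦmono (hf_nonneg x) (hg_nonneg x)
      have h2 : Φ (f x) + w x * (g x - f x) ≤ Φ (g x) := by
        rw [hw_eq x]; exact h1
      rw [mul_sub] at h2
      linarith
    have hint2 : IntegrableOn (fun x => w x * g x - w x * f x) (ball 0 R) := hwg.sub hwf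
    have hint1 : IntegrableOn
        (fun x => Φ (f x) + (w x * g x - w x * f x)) (ball 0 R) := hΦf.add hint2
    have hmain := setIntegral_mono_on hint1 hΦg measurableSet_ball hpt
    have hsplit : (∫ x in ball (0 : EuclideanSpace ℝ (Fin N)) R,
          (Φ (f x) + (w x * g x - w x * f x))) =
        (∫ x in ball (0 : EuclideanSpace ℝ (Fin N)) R, Φ (f x)) +
          ((∫ x in ball (0 : EuclideanSpace ℝ (Fin N)) R, w x * g x) -
            ∫ x in ball (0 : EuclideanSpace ℝ (Fin N)) R, w x * f x) := by
      rw [integral_add hΦf hint2, integral_sub hwg hwf]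
    rw [hsplit] at hmain
    linarith
end

section
/- If f and g are rearranged integrable functions on a ball Ω = B_R(0) in R^N with f ≺ g (f less concentrated than g), then ‖f‖_{L^p(Ω)} ≤ ‖g‖_{L^p(Ω)} for every p ∈ [1, ∞]. -/
open MeasureTheory Set Metric Filter
open scoped ENNReal NNReal Topology

lemma radial_measurable {N : ℕ} {φ : ℝ → ℝ} (hmono : AntitoneOn φ (Ici 0)) :
    Measurable fun x : EuclideanSpace ℝ (Fin N) => φ ‖x‖ := by
  have hψ : Antitone fun r : ℝ => φ (max r 0) := fun a b hab =>
    hmono (le_max_right a 0) (le_max_right b 0) (max_le_max hab le_rfl)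
  have := hψ.measurable.comp measurable_norm (α := EuclideanSpace ℝ (Fin N))
  convert this using 2 with x
  simp [Function.comp, max_eq_left (norm_nonneg x)]

lemma rc_le {φ : ℝ → ℝ} {ρ R t : ℝ} (hρR : ρ < R)
    (hrc : ContinuousWithinAt φ (Ici ρ) ρ) (h : ∀ r, ρ < r → r ≤ R → φ r ≤ t) :
    φ ρ ≤ t := by
  have h1 : Filter.Tendsto φ (𝓝[>] ρ) (𝓝 (φ ρ)) := hrc.mono Ioi_subset_Ici_self
  refine le_of_tendsto h1 ?_
  filter_upwards [Ioc_mem_nhdsGT_of_mem ⟨le_rfl, hρR⟩] with r hr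
  exact h r hr.1 hr.2

lemma small_ball {φ : ℝ → ℝ} {c R : ℝ} (hR : 0 < R)
    (hrc : ContinuousWithinAt φ (Ici 0) 0) (hc : c < φ 0) :
    ∃ δ : ℝ, 0 < δ ∧ δ ≤ R ∧ ∀ r : ℝ, 0 ≤ r → r < δ → c < φ r := by
  have hev : ∀ᶠ r in 𝓝[Ici 0] (0:ℝ), c < φ r :=
    hrc.eventually_const_lt hc
  rw [eventually_nhdsWithin_iff] at hev
  obtain ⟨δ₀, hδ₀, hδball⟩ := Metric.eventually_nhds_iff_ball.mp hev
  refine ⟨min δ₀ R, lt_min hδ₀ hR, min_le_right _ _, fun r hr hrδ => ?_⟩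
  exact hδball r (by simpa [Real.ball_eq_Ioo] using
    ⟨by linarith [lt_of_lt_of_le hrδ (min_le_left δ₀ R)],
     lt_of_lt_of_le hrδ (min_le_left δ₀ R)⟩) hr

lemma rpow_mul_self {q t : ℝ} (ht : 0 < t) : t ^ (q - 2) * t = t ^ (q - 1) := by
  nth_rewrite 2 [← Real.rpow_one t]
  rw [← Real.rpow_add ht]
  ring_nf

lemma layer_integrable {q a : ℝ} (hq : 1 < q) (ha : 0 ≤ a) :
    IntegrableOn (fun t : ℝ => t ^ (q - 2) * max (a - t) 0) (Ioi 0) := by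
  have hdecomp : Ioi (0:ℝ) = Ioc 0 a ∪ Ioi a := (Ioc_union_Ioi_eq_Ioi ha).symm
  rw [hdecomp]
  refine IntegrableOn.union ?_ ?_
  · have h1 : IntervalIntegrable (fun t : ℝ => a * t ^ (q - 2) - t ^ (q - 1)) volume 0 a := by
      refine IntervalIntegrable.sub (IntervalIntegrable.const_mul ?_ a) ?_ <;>
        exact intervalIntegral.intervalIntegrable_rpow' (by linarith)
    have h2 := (intervalIntegrable_iff_integrableOn_Ioc_of_le ha).mp h1
    refine h2.congr_fun ?_ measurableSet_Ioc
    intro t ht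
    dsimp only
    rw [max_eq_left (by linarith [ht.2] : (0:ℝ) ≤ a - t), mul_sub, rpow_mul_self ht.1]
    ring
  · refine (integrable_zero _ _ _).integrableOn.congr_fun ?_ measurableSet_Ioi
    intro t ht
    dsimp only
    rw [max_eq_right (by linarith [ht.out] : a - t ≤ 0), mul_zero]
    rfl

lemma layer_integral {q a : ℝ} (hq : 1 < q) (ha : 0 ≤ a) :
    ∫ t in Ioi (0:ℝ), t ^ (q - 2) * max (a - t) 0 = a ^ q / (q * (q - 1)) := by
  have hdecomp : Ioi (0:ℝ) = Ioc 0 a ∪ Ioi a := (Ioc_union_Ioi_eq_Ioi ha).symm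
  have hint := layer_integrable hq ha
  rw [hdecomp] at hint ⊢
  rw [setIntegral_union (Ioc_disjoint_Ioi le_rfl) measurableSet_Ioi
    (hint.mono_set subset_union_left) (hint.mono_set subset_union_right)]
  have h2 : ∫ t in Ioi a, t ^ (q - 2) * max (a - t) 0 = 0 := by
    rw [setIntegral_congr_fun measurableSet_Ioi (g := fun _ => (0:ℝ))
      (fun t ht => by dsimp only; rw [max_eq_right (by linarith [ht.out] : a - t ≤ 0), mul_zero])]
    simp
  have h1 : ∫ t in Ioc 0 a, t ^ (q - 2) * max (a - t) 0
      = ∫ t in Ioc 0 a, (a * t ^ (q - 2) - t ^ (q - 1)) := by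
    refine setIntegral_congr_fun measurableSet_Ioc (fun t ht => ?_)
    rw [max_eq_left (by linarith [ht.2] : (0:ℝ) ≤ a - t), mul_sub, rpow_mul_self ht.1]
    ring
  rw [h1, h2, add_zero, ← intervalIntegral.integral_of_le ha]
  rw [intervalIntegral.integral_sub
    ((intervalIntegral.intervalIntegrable_rpow' (by linarith)).const_mul a)
    (intervalIntegral.intervalIntegrable_rpow' (by linarith)),
    intervalIntegral.integral_const_mul, integral_rpow (Or.inl (by linarith)),
    integral_rpow (Or.inl (by linarith))]
  have e2 : q - 2 + 1 = q - 1 := by ring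
  have e3 : q - 1 + 1 = q := by ring
  rw [e2, e3, Real.zero_rpow (by linarith : q - 1 ≠ 0), Real.zero_rpow (by linarith : q ≠ 0),
    sub_zero, sub_zero]
  rcases eq_or_lt_of_le ha with rfl | ha'
  · simp [Real.zero_rpow (by linarith : q ≠ 0), Real.zero_rpow (by linarith : q - 1 ≠ 0)]
  · have haa : a * a ^ (q - 1) = a ^ q := by
      nth_rewrite 1 [← Real.rpow_one a]
      rw [← Real.rpow_add ha']
      ring_nf
    rw [mul_div_assoc', haa]
    have hne1 : q - 1 ≠ 0 := by linarith
    have hne2 : q ≠ 0 := by linarith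
    rw [div_sub_div _ _ hne1 hne2, div_eq_div_iff (by positivity) (by positivity)]
    ring

lemma layer_ennreal {q a : ℝ} (hq : 1 < q) (ha : 0 ≤ a) :
    ENNReal.ofReal (a ^ q) = ENNReal.ofReal (q * (q - 1)) *
      ∫⁻ t in Ioi (0:ℝ), ENNReal.ofReal (t ^ (q - 2) * max (a - t) 0) := by
  rw [← ofReal_integral_eq_lintegral_ofReal (layer_integrable hq ha)
    (((ae_restrict_mem measurableSet_Ioi).mono) fun t ht =>
      mul_nonneg (Real.rpow_nonneg (le_of_lt ht) _) (le_max_right _ _)),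
    layer_integral hq ha, ← ENNReal.ofReal_mul (by nlinarith : (0:ℝ) ≤ q * (q - 1))]
  have hne : q * (q - 1) ≠ 0 := mul_ne_zero (by linarith) (by linarith)
  congr 1
  rw [mul_comm]
  exact (div_mul_cancel₀ _ hne).symm

lemma stepA {N : ℕ} {R : ℝ} (hR : 0 < R)
    {f g : EuclideanSpace ℝ (Fin N) → ℝ} {φf : ℝ → ℝ}
    (hfrad : ∀ x, f x = φf ‖x‖)
    (hφfmono : AntitoneOn φf (Ici 0))
    (hφfrc : ∀ r, 0 ≤ r → ContinuousWithinAt φf (Ici r) r)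
    (hfi : IntegrableOn f (ball 0 R)) (hgi : IntegrableOn g (ball 0 R))
    (hconc : ∀ r, 0 < r → r ≤ R →
      (∫ x in ball (0 : EuclideanSpace ℝ (Fin N)) r, f x) ≤
        ∫ x in ball (0 : EuclideanSpace ℝ (Fin N)) r, g x)
    {t : ℝ} (ht : 0 ≤ t) :
    (∫ x in ball (0 : EuclideanSpace ℝ (Fin N)) R, max (f x - t) 0) ≤
      ∫ x in ball (0 : EuclideanSpace ℝ (Fin N)) R, max (g x - t) 0 := by
  have hballfin : ∀ r : ℝ, volume (ball (0 : EuclideanSpace ℝ (Fin N)) r) < ⊤ :=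
    fun r => measure_ball_lt_top
  have hconst : ∀ r : ℝ, IntegrableOn (fun _ : EuclideanSpace ℝ (Fin N) => t)
      (ball 0 r) := fun r => integrableOn_const (hballfin r).ne
  have hft : IntegrableOn (fun x => max (f x - t) 0) (ball 0 R) :=
    (hfi.sub (hconst R)).pos_part
  have hgt : IntegrableOn (fun x => max (g x - t) 0) (ball 0 R) :=
    (hgi.sub (hconst R)).pos_part
  have hgtnn : ∀ x, 0 ≤ max (g x - t) 0 := fun x => le_max_right _ _
  set S : Set ℝ := {r | r ∈ Ioc 0 R ∧ t < φf r} with hSdef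
  by_cases hS : S.Nonempty
  · set ρ := sSup S with hρdef
    have hbdd : BddAbove S := ⟨R, fun r hr => hr.1.2⟩
    have hρR : ρ ≤ R := csSup_le hS fun r hr => hr.1.2
    obtain ⟨r₀, hr₀⟩ := id hS
    have hρ0 : 0 < ρ := lt_of_lt_of_le hr₀.1.1 (le_csSup hbdd hr₀)
    have hin : ∀ x ∈ ball (0 : EuclideanSpace ℝ (Fin N)) ρ, t < f x := by
      intro x hx
      rw [mem_ball_zero_iff] at hx
      obtain ⟨r', hr'S, hlt⟩ := exists_lt_of_lt_csSup hS hx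
      calc t < φf r' := hr'S.2
        _ ≤ φf ‖x‖ := hφfmono (norm_nonneg x) (le_of_lt hr'S.1.1) hlt.le
        _ = f x := (hfrad x).symm
    have hout : ∀ x ∈ ball (0 : EuclideanSpace ℝ (Fin N)) R \ ball 0 ρ,
        max (f x - t) 0 = 0 := by
      intro x hx
      obtain ⟨hx1, hx2⟩ := hx
      rw [mem_ball_zero_iff] at hx1
      rw [mem_ball_zero_iff, not_lt] at hx2
      have hnotS : ∀ r, ρ < r → r ≤ R → φf r ≤ t := by
        intro r hr1 hr2
        by_contra hcon
        push_neg at hcon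
        exact absurd (le_csSup hbdd ⟨⟨lt_trans hρ0 hr1, hr2⟩, hcon⟩) (not_le.2 hr1)
      have hle : φf ‖x‖ ≤ t := by
        rcases eq_or_lt_of_le hx2 with heq | hlt
        · rw [← heq]
          exact rc_le (lt_of_le_of_lt hx2 hx1) (hφfrc ρ hρ0.le)
            (fun r h1 h2 => hnotS r (heq ▸ h1) h2)
        · exact hnotS ‖x‖ hlt hx1.le
      rw [hfrad x]
      exact max_eq_right (by linarith)
    have hsub : ball (0 : EuclideanSpace ℝ (Fin N)) ρ ⊆ ball 0 R := ball_subset_ball hρR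
    have hsplit : (∫ x in ball (0 : EuclideanSpace ℝ (Fin N)) R, max (f x - t) 0)
        = ∫ x in ball (0 : EuclideanSpace ℝ (Fin N)) ρ, max (f x - t) 0 := by
      have h0 : (∫ x in ball (0 : EuclideanSpace ℝ (Fin N)) R \ ball 0 ρ,
          max (f x - t) 0) = 0 := by
        rw [setIntegral_congr_fun (measurableSet_ball.diff measurableSet_ball)
          (g := fun _ => (0:ℝ)) hout]
        simp
      rw [← union_diff_cancel hsub,
        setIntegral_union disjoint_sdiff_right (measurableSet_ball.diff measurableSet_ball)
          (hft.mono_set hsub) (hft.mono_set diff_subset), h0, add_zero]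
    rw [hsplit]
    have hfiρ := hfi.mono_set hsub
    have hgiρ := hgi.mono_set hsub
    calc (∫ x in ball (0 : EuclideanSpace ℝ (Fin N)) ρ, max (f x - t) 0)
        = ∫ x in ball (0 : EuclideanSpace ℝ (Fin N)) ρ, (f x - t) :=
          setIntegral_congr_fun measurableSet_ball
            (fun x hx => max_eq_left (by linarith [hin x hx]))
      _ = (∫ x in ball (0 : EuclideanSpace ℝ (Fin N)) ρ, f x)
          - (volume (ball (0 : EuclideanSpace ℝ (Fin N)) ρ)).toReal * t := by
          rw [integral_sub hfiρ (hconst ρ), setIntegral_const, smul_eq_mul, measureReal_def]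
      _ ≤ (∫ x in ball (0 : EuclideanSpace ℝ (Fin N)) ρ, g x)
          - (volume (ball (0 : EuclideanSpace ℝ (Fin N)) ρ)).toReal * t :=
          sub_le_sub_right (hconc ρ hρ0 hρR) _
      _ = ∫ x in ball (0 : EuclideanSpace ℝ (Fin N)) ρ, (g x - t) := by
          rw [integral_sub hgiρ (hconst ρ), setIntegral_const, smul_eq_mul, measureReal_def]
      _ ≤ ∫ x in ball (0 : EuclideanSpace ℝ (Fin N)) ρ, max (g x - t) 0 :=
          setIntegral_mono (hgiρ.sub (hconst ρ)) (hgt.mono_set hsub)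
            (fun x => le_max_left _ _)
      _ ≤ ∫ x in ball (0 : EuclideanSpace ℝ (Fin N)) R, max (g x - t) 0 :=
          setIntegral_mono_set hgt (Filter.Eventually.of_forall hgtnn)
            (HasSubset.Subset.eventuallyLE hsub)
  · rw [not_nonempty_iff_eq_empty] at hS
    have hzero : ∀ x ∈ ball (0 : EuclideanSpace ℝ (Fin N)) R, max (f x - t) 0 = 0 := by
      intro x hx
      rw [mem_ball_zero_iff] at hx
      have hnotS : ∀ r, 0 < r → r ≤ R → φf r ≤ t := by
        intro r h1 h2
        by_contra hcon
        push_neg at hcon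
        have hmem : r ∈ S := ⟨⟨h1, h2⟩, hcon⟩
        rw [hS] at hmem
        exact hmem
      have hle : φf ‖x‖ ≤ t := by
        rcases eq_or_lt_of_le (norm_nonneg x) with heq | hlt
        · rw [← heq]
          exact rc_le hR (hφfrc 0 le_rfl) hnotS
        · exact hnotS ‖x‖ hlt hx.le
      rw [hfrad x]
      exact max_eq_right (by linarith)
    rw [setIntegral_congr_fun measurableSet_ball (g := fun _ => (0:ℝ)) hzero]
    simp only [integral_zero]
    exact setIntegral_nonneg measurableSet_ball fun x _ => hgtnn x

lemma phi0_le {N : ℕ} {R : ℝ} (hR : 0 < R)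
    {f g : EuclideanSpace ℝ (Fin N) → ℝ} {φf φg : ℝ → ℝ}
    (hfrad : ∀ x, f x = φf ‖x‖) (hgrad : ∀ x, g x = φg ‖x‖)
    (hφgmono : AntitoneOn φg (Ici 0))
    (hφfrc : ContinuousWithinAt φf (Ici 0) 0)
    (hfi : IntegrableOn f (ball 0 R)) (hgi : IntegrableOn g (ball 0 R))
    (hconc : ∀ r, 0 < r → r ≤ R →
      (∫ x in ball (0 : EuclideanSpace ℝ (Fin N)) r, f x) ≤
        ∫ x in ball (0 : EuclideanSpace ℝ (Fin N)) r, g x) :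
    φf 0 ≤ φg 0 := by
  by_contra hcon
  push_neg at hcon
  set c : ℝ := (φg 0 + φf 0) / 2 with hcdef
  have hc1 : c < φf 0 := by rw [hcdef]; linarith
  have hc2 : φg 0 < c := by rw [hcdef]; linarith
  obtain ⟨δ, hδ0, hδR, hδ⟩ := small_ball hR hφfrc hc1
  have hsub : ball (0 : EuclideanSpace ℝ (Fin N)) δ ⊆ ball 0 R := ball_subset_ball hδR
  set V : ℝ := (volume (ball (0 : EuclideanSpace ℝ (Fin N)) δ)).toReal with hVdef
  have hV0 : 0 < V :=
    ENNReal.toReal_pos (measure_ball_pos volume _ hδ0).ne' measure_ball_lt_top.ne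
  have h1 : c * V ≤ ∫ x in ball (0 : EuclideanSpace ℝ (Fin N)) δ, f x := by
    have := setIntegral_mono_on (f := fun _ : EuclideanSpace ℝ (Fin N) => c)
      (integrableOn_const measure_ball_lt_top.ne) (hfi.mono_set hsub)
      measurableSet_ball (fun x hx => by
        rw [hfrad x]
        exact (hδ ‖x‖ (norm_nonneg x) (mem_ball_zero_iff.1 hx)).le)
    rwa [setIntegral_const, smul_eq_mul, mul_comm] at this
  have h2 : (∫ x in ball (0 : EuclideanSpace ℝ (Fin N)) δ, g x) ≤ φg 0 * V := by
    have := setIntegral_mono_on (g := fun _ : EuclideanSpace ℝ (Fin N) => φg 0)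
      (hgi.mono_set hsub) (integrableOn_const measure_ball_lt_top.ne)
      measurableSet_ball (fun x hx => by
        rw [hgrad x]
        exact hφgmono (self_mem_Ici) (norm_nonneg x) (norm_nonneg x))
    rwa [setIntegral_const, smul_eq_mul, mul_comm] at this
  have h3 := hconc δ hδ0 hδR
  nlinarith

/-- If `f` and `g` are rearranged integrable functions on the ball
`Ω = B_R(0) ⊂ ℝ^N` with `f ≺ g` (f less concentrated than g), then
`‖f‖_{L^p(Ω)} ≤ ‖g‖_{L^p(Ω)}` for every `p ∈ [1,∞]`. -/
theorem stmt1 (N : ℕ) (R : ℝ) (hR : 0 < R)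
    (f g : EuclideanSpace ℝ (Fin N) → ℝ) (φf φg : ℝ → ℝ)
    (hfrad : ∀ x, f x = φf ‖x‖) (hgrad : ∀ x, g x = φg ‖x‖)
    (hφf0 : ∀ r, 0 ≤ r → 0 ≤ φf r) (hφg0 : ∀ r, 0 ≤ r → 0 ≤ φg r)
    (hφfmono : AntitoneOn φf (Ici 0)) (hφgmono : AntitoneOn φg (Ici 0))
    (hφfrc : ∀ r, 0 ≤ r → ContinuousWithinAt φf (Ici r) r)
    (hφgrc : ∀ r, 0 ≤ r → ContinuousWithinAt φg (Ici r) r)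
    (hfi : IntegrableOn f (ball 0 R)) (hgi : IntegrableOn g (ball 0 R))
    (hconc : ∀ r, 0 < r → r ≤ R →
      (∫ x in ball (0 : EuclideanSpace ℝ (Fin N)) r, f x) ≤
        ∫ x in ball (0 : EuclideanSpace ℝ (Fin N)) r, g x)
    (p : ℝ≥0∞) (hp : 1 ≤ p) :
    eLpNorm f p (volume.restrict (ball (0 : EuclideanSpace ℝ (Fin N)) R)) ≤
      eLpNorm g p (volume.restrict (ball (0 : EuclideanSpace ℝ (Fin N)) R)) := by
  have hf0 : ∀ x, 0 ≤ f x := fun x => (hfrad x) ▸ hφf0 _ (norm_nonneg x)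
  have hg0 : ∀ x, 0 ≤ g x := fun x => (hgrad x) ▸ hφg0 _ (norm_nonneg x)
  have hfm : Measurable f := by
    have hfeq : f = fun x => φf ‖x‖ := funext hfrad
    rw [hfeq]; exact radial_measurable hφfmono
  have hgm : Measurable g := by
    have hgeq : g = fun x => φg ‖x‖ := funext hgrad
    rw [hgeq]; exact radial_measurable hφgmono
  set μ := volume.restrict (ball (0 : EuclideanSpace ℝ (Fin N)) R) with hμdef
  rcases eq_or_ne p ⊤ with rfl | hptop
  · -- p = ∞
    rw [eLpNorm_exponent_top, eLpNorm_exponent_top]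
    have hfg0 : φf 0 ≤ φg 0 :=
      phi0_le hR hfrad hgrad hφgmono (hφfrc 0 le_rfl) hfi hgi hconc
    have hupper : eLpNormEssSup f μ ≤ ENNReal.ofReal (φg 0) :=
      eLpNormEssSup_le_of_ae_bound (Eventually.of_forall fun x => by
        rw [Real.norm_eq_abs, abs_of_nonneg (hf0 x), hfrad x]
        exact le_trans (hφfmono self_mem_Ici (norm_nonneg x) (norm_nonneg x)) hfg0)
    refine le_trans hupper ?_
    by_contra hcon
    push_neg at hcon
    obtain ⟨c, hc0, hc1, hc2⟩ := ENNReal.lt_iff_exists_real_btwn.mp hcon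
    have hcφ : c < φg 0 := by
      by_contra h
      push_neg at h
      exact absurd (lt_of_lt_of_le hc2 (ENNReal.ofReal_le_ofReal h)) (lt_irrefl _)
    obtain ⟨δ, hδ0, hδR, hδ⟩ := small_ball hR (hφgrc 0 le_rfl) hcφ
    have hae2 : ∀ᵐ x ∂μ, (‖g x‖₊ : ℝ≥0∞) < ENNReal.ofReal c :=
      ae_le_eLpNormEssSup.mono fun x hx => lt_of_le_of_lt hx hc1
    have hball : ∀ x ∈ ball (0 : EuclideanSpace ℝ (Fin N)) δ,
        ENNReal.ofReal c ≤ (‖g x‖₊ : ℝ≥0∞) := fun x hx => by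
      rw [← enorm_eq_nnnorm, Real.enorm_eq_ofReal (hg0 x)]
      refine ENNReal.ofReal_le_ofReal ?_
      rw [hgrad x]
      exact (hδ ‖x‖ (norm_nonneg x) (mem_ball_zero_iff.1 hx)).le
    rw [ae_iff] at hae2
    have hsubnull : ball (0 : EuclideanSpace ℝ (Fin N)) δ ⊆
        {x | ¬ (‖g x‖₊ : ℝ≥0∞) < ENNReal.ofReal c} := fun x hx => not_lt.2 (hball x hx)
    have hnull : μ (ball (0 : EuclideanSpace ℝ (Fin N)) δ) = 0 :=
      measure_mono_null hsubnull hae2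
    rw [hμdef, Measure.restrict_apply measurableSet_ball,
      inter_eq_left.2 (ball_subset_ball hδR)] at hnull
    exact absurd hnull (measure_ball_pos volume _ hδ0).ne'
  · -- p finite
    have hp0 : p ≠ 0 := fun h => by simp [h] at hp
    set q : ℝ := p.toReal with hqdef
    have hq1 : (1:ℝ) ≤ q := by
      rw [hqdef, ← ENNReal.toReal_one]
      exact ENNReal.toReal_mono hptop hp
    rw [eLpNorm_eq_lintegral_rpow_enorm_toReal hp0 hptop,
      eLpNorm_eq_lintegral_rpow_enorm_toReal hp0 hptop]
    refine ENNReal.rpow_le_rpow ?_ (by positivity)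
    have hrwf : (∫⁻ x, ‖f x‖ₑ ^ q ∂μ) = ∫⁻ x, ENNReal.ofReal (f x ^ q) ∂μ :=
      lintegral_congr fun x => by
        rw [Real.enorm_eq_ofReal (hf0 x), ENNReal.ofReal_rpow_of_nonneg (hf0 x) (by linarith)]
    have hrwg : (∫⁻ x, ‖g x‖ₑ ^ q ∂μ) = ∫⁻ x, ENNReal.ofReal (g x ^ q) ∂μ :=
      lintegral_congr fun x => by
        rw [Real.enorm_eq_ofReal (hg0 x), ENNReal.ofReal_rpow_of_nonneg (hg0 x) (by linarith)]
    rw [hrwf, hrwg]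
    rcases eq_or_lt_of_le hq1 with hq | hq
    · -- q = 1
      simp_rw [← hq, Real.rpow_one]
      rw [← ofReal_integral_eq_lintegral_ofReal hfi (Eventually.of_forall hf0),
        ← ofReal_integral_eq_lintegral_ofReal hgi (Eventually.of_forall hg0)]
      exact ENNReal.ofReal_le_ofReal (hconc R hR le_rfl)
    · -- q > 1 : layer cake
      set c : ℝ≥0∞ := ENNReal.ofReal (q * (q - 1)) with hcdef
      have hswap : ∀ h : EuclideanSpace ℝ (Fin N) → ℝ, Measurable h →
          (∫⁻ x, (∫⁻ t in Ioi (0:ℝ), ENNReal.ofReal (t ^ (q-2) * max (h x - t) 0)) ∂μ)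
          = ∫⁻ t in Ioi (0:ℝ), ∫⁻ x, ENNReal.ofReal (t ^ (q-2) * max (h x - t) 0) ∂μ := by
        intro h hm
        refine lintegral_lintegral_swap ?_
        apply Measurable.aemeasurable
        have : Measurable fun z : EuclideanSpace ℝ (Fin N) × ℝ =>
            ENNReal.ofReal (z.2 ^ (q-2) * max (h z.1 - z.2) 0) := by
          apply Measurable.ennreal_ofReal
          exact ((measurable_snd.pow_const _).mul
            (((hm.comp measurable_fst).sub measurable_snd).max measurable_const))
        exact this
      have hintmax : ∀ (h : EuclideanSpace ℝ (Fin N) → ℝ), IntegrableOn h (ball 0 R) →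
          ∀ t : ℝ, Integrable (fun x => max (h x - t) 0) μ := by
        intro h hhi t
        exact (hhi.sub (integrableOn_const measure_ball_lt_top.ne)).pos_part
      calc (∫⁻ x, ENNReal.ofReal (f x ^ q) ∂μ)
          = ∫⁻ x, (c * ∫⁻ t in Ioi (0:ℝ), ENNReal.ofReal (t ^ (q-2) * max (f x - t) 0)) ∂μ :=
            lintegral_congr fun x => layer_ennreal hq (hf0 x)
        _ = c * ∫⁻ x, (∫⁻ t in Ioi (0:ℝ), ENNReal.ofReal (t ^ (q-2) * max (f x - t) 0)) ∂μ :=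
            lintegral_const_mul' _ _ ENNReal.ofReal_ne_top
        _ = c * ∫⁻ t in Ioi (0:ℝ), ∫⁻ x, ENNReal.ofReal (t ^ (q-2) * max (f x - t) 0) ∂μ := by
            rw [hswap f hfm]
        _ ≤ c * ∫⁻ t in Ioi (0:ℝ), ∫⁻ x, ENNReal.ofReal (t ^ (q-2) * max (g x - t) 0) ∂μ := by
            refine mul_le_mul_right ?_ _
            refine lintegral_mono_ae (((ae_restrict_mem measurableSet_Ioi).mono) fun t ht => ?_)
            have ht0 : (0:ℝ) < t := ht
            have htq : (0:ℝ) ≤ t ^ (q-2) := Real.rpow_nonneg ht0.le _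
            calc (∫⁻ x, ENNReal.ofReal (t ^ (q-2) * max (f x - t) 0) ∂μ)
                = ENNReal.ofReal (t ^ (q-2)) * ∫⁻ x, ENNReal.ofReal (max (f x - t) 0) ∂μ := by
                  rw [← lintegral_const_mul' _ _ ENNReal.ofReal_ne_top]
                  exact lintegral_congr fun x => ENNReal.ofReal_mul htq
              _ ≤ ENNReal.ofReal (t ^ (q-2)) * ∫⁻ x, ENNReal.ofReal (max (g x - t) 0) ∂μ := by
                  refine mul_le_mul_right ?_ _
                  rw [← ofReal_integral_eq_lintegral_ofReal (hintmax f hfi t)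
                      (Eventually.of_forall fun x => le_max_right _ _),
                    ← ofReal_integral_eq_lintegral_ofReal (hintmax g hgi t)
                      (Eventually.of_forall fun x => le_max_right _ _)]
                  exact ENNReal.ofReal_le_ofReal
                    (stepA hR hfrad hφfmono hφfrc hfi hgi hconc ht0.le)
              _ = ∫⁻ x, ENNReal.ofReal (t ^ (q-2) * max (g x - t) 0) ∂μ := by
                  rw [← lintegral_const_mul' _ _ ENNReal.ofReal_ne_top]
                  exact lintegral_congr fun x => (ENNReal.ofReal_mul htq).symm
        _ = c * ∫⁻ x, (∫⁻ t in Ioi (0:ℝ), ENNReal.ofReal (t ^ (q-2) * max (g x - t) 0)) ∂μ := by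
            rw [hswap g hgm]
        _ = ∫⁻ x, (c * ∫⁻ t in Ioi (0:ℝ), ENNReal.ofReal (t ^ (q-2) * max (g x - t) 0)) ∂μ :=
            (lintegral_const_mul' _ _ ENNReal.ofReal_ne_top).symm
        _ = ∫⁻ x, ENNReal.ofReal (g x ^ q) ∂μ :=
            lintegral_congr fun x => (layer_ennreal hq (hg0 x)).symm
end

section
/- Let f, g ∈ L¹_{loc}(R^N) be rearranged functions with g(x) → 0 as |x| → ∞, and suppose f ≺ g. Then for every λ > 0, the measure of the level set {f > λ} is finite whenever the measure of {g > λ} is finite, and sup f ≤ sup g (i.e. ‖f‖_∞ ≤ ‖g‖_∞). -/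
open MeasureTheory Set Metric Filter
open scoped ENNReal Topology

/-- Right-continuity extraction: if `φ` is right-continuous at `0` and `c < φ 0`,
then `c < φ r` for all small nonnegative `r`. -/
lemma stmt19_aux_rc {φ : ℝ → ℝ} (h : ContinuousWithinAt φ (Ici 0) 0) {c : ℝ}
    (hc : c < φ 0) : ∃ δ > 0, ∀ r : ℝ, 0 ≤ r → r < δ → c < φ r := by
  have ev : ∀ᶠ r in 𝓝[Ici (0:ℝ)] 0, c < φ r := h.eventually (eventually_gt_nhds hc)
  rw [eventually_iff, mem_nhdsWithin_iff] at ev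
  obtain ⟨δ, hδ, hsub⟩ := ev
  refine ⟨δ, hδ, fun r hr0 hrδ => ?_⟩
  exact hsub ⟨by simpa [Real.ball_eq_Ioo] using ⟨by linarith, hrδ⟩, hr0⟩

/-- Let `f, g ∈ L¹_loc(ℝ^N)` be rearranged functions (nonnegative,
radial, with nonincreasing right-continuous profiles), with `g(x) → 0` as
`|x| → ∞`, and `f ≺ g`. Then for every `λ > 0` the level set `{f > λ}` has
finite measure whenever `{g > λ}` does, and `‖f‖_∞ ≤ ‖g‖_∞`. -/
theorem stmt19 (N : ℕ) (hN : 0 < N)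
    (f g : EuclideanSpace ℝ (Fin N) → ℝ) (φf φg : ℝ → ℝ)
    (hfrad : ∀ x, f x = φf ‖x‖) (hgrad : ∀ x, g x = φg ‖x‖)
    (hφf0 : ∀ r, 0 ≤ r → 0 ≤ φf r) (hφg0 : ∀ r, 0 ≤ r → 0 ≤ φg r)
    (hφfmono : AntitoneOn φf (Ici 0)) (hφgmono : AntitoneOn φg (Ici 0))
    (hφfrc : ∀ r, 0 ≤ r → ContinuousWithinAt φf (Ici r) r)
    (hφgrc : ∀ r, 0 ≤ r → ContinuousWithinAt φg (Ici r) r)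
    (hfloc : LocallyIntegrable f) (hgloc : LocallyIntegrable g)
    (hgdecay : Tendsto φg atTop (𝓝 0))
    (hconc : ∀ r : ℝ, 0 < r →
      (∫ x in ball (0 : EuclideanSpace ℝ (Fin N)) r, f x) ≤
        ∫ x in ball (0 : EuclideanSpace ℝ (Fin N)) r, g x) :
    (∀ l : ℝ, 0 < l →
        volume {x : EuclideanSpace ℝ (Fin N) | l < g x} < ⊤ →
        volume {x : EuclideanSpace ℝ (Fin N) | l < f x} < ⊤) ∧
      eLpNorm f ⊤ volume ≤ eLpNorm g ⊤ volume := by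
  haveI : Nontrivial (EuclideanSpace ℝ (Fin N)) :=
    Module.nontrivial_of_finrank_pos (R := ℝ)
      (by rw [finrank_euclideanSpace_fin]; omega)
  -- basic integrability on balls
  have hf_int : ∀ r : ℝ, IntegrableOn f (ball (0 : EuclideanSpace ℝ (Fin N)) r) volume := fun r =>
    (hfloc.integrableOn_isCompact (isCompact_closedBall 0 r)).mono_set
      ball_subset_closedBall
  have hg_int : ∀ r : ℝ, IntegrableOn g (ball (0 : EuclideanSpace ℝ (Fin N)) r) volume := fun r =>
    (hgloc.integrableOn_isCompact (isCompact_closedBall 0 r)).mono_set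
      ball_subset_closedBall
  have hf_nonneg : ∀ x : EuclideanSpace ℝ (Fin N), 0 ≤ f x := fun x => by
    rw [hfrad]; exact hφf0 _ (norm_nonneg x)
  have hg_nonneg : ∀ x : EuclideanSpace ℝ (Fin N), 0 ≤ g x := fun x => by
    rw [hgrad]; exact hφg0 _ (norm_nonneg x)
  have hf_le_top : ∀ x : EuclideanSpace ℝ (Fin N), f x ≤ φf 0 := fun x => by
    rw [hfrad]
    exact hφfmono (mem_Ici.2 le_rfl) (mem_Ici.2 (norm_nonneg x)) (norm_nonneg x)
  have hg_le_top : ∀ x : EuclideanSpace ℝ (Fin N), g x ≤ φg 0 := fun x => by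
    rw [hgrad]
    exact hφgmono (mem_Ici.2 le_rfl) (mem_Ici.2 (norm_nonneg x)) (norm_nonneg x)
  -- volume of balls
  have hvol : ∀ r : ℝ, 0 ≤ r →
      volume (ball (0 : EuclideanSpace ℝ (Fin N)) r) = ENNReal.ofReal (r ^ N) * volume (ball (0 : EuclideanSpace ℝ (Fin N)) 1) := by
    intro r hr
    rw [Measure.addHaar_ball volume (0 : EuclideanSpace ℝ (Fin N)) hr, finrank_euclideanSpace_fin]
  have hv1pos : 0 < (volume (ball (0 : EuclideanSpace ℝ (Fin N)) 1)).toReal :=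
    ENNReal.toReal_pos (measure_ball_pos volume 0 one_pos).ne' measure_ball_lt_top.ne
  -- Key claim: φf 0 ≤ φg 0
  have key : φf 0 ≤ φg 0 := by
    by_contra hlt
    push_neg at hlt
    set m := (φg 0 + φf 0) / 2 with hm
    have hm1 : φg 0 < m := by simp only [hm]; linarith
    have hm2 : m < φf 0 := by simp only [hm]; linarith
    obtain ⟨δ, hδ, hδf⟩ := stmt19_aux_rc (hφfrc 0 le_rfl) hm2
    have hvpos : 0 < (volume (ball (0 : EuclideanSpace ℝ (Fin N)) δ)).toReal :=
      ENNReal.toReal_pos (measure_ball_pos volume 0 hδ).ne' measure_ball_lt_top.ne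
    set v := (volume (ball (0 : EuclideanSpace ℝ (Fin N)) δ)).toReal
    have h1 : m * v ≤ ∫ x in ball (0 : EuclideanSpace ℝ (Fin N)) δ, f x := by
      have := setIntegral_mono_on (integrableOn_const measure_ball_lt_top.ne)
        (hf_int δ) measurableSet_ball
        (fun x hx => by
          rw [hfrad]
          exact le_of_lt (hδf _ (norm_nonneg x) (mem_ball_zero_iff.1 hx)))
      simpa [setIntegral_const, smul_eq_mul, mul_comm, Measure.real, v] using this
    have h2 : (∫ x in ball (0 : EuclideanSpace ℝ (Fin N)) δ, g x) ≤ φg 0 * v := by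
      have := setIntegral_mono_on (hg_int δ)
        (integrableOn_const measure_ball_lt_top.ne) measurableSet_ball
        (fun x _ => hg_le_top x)
      simpa [setIntegral_const, smul_eq_mul, mul_comm, Measure.real, v] using this
    have h3 := hconc δ hδ
    nlinarith [mul_lt_mul_of_pos_right hm1 hvpos]
  constructor
  · -- level sets
    intro l hl _
    by_cases hR : ∃ R : ℝ, 0 ≤ R ∧ φf R ≤ l
    · obtain ⟨R, hR0, hRl⟩ := hR
      have hsub : {x : EuclideanSpace ℝ (Fin N) | l < f x} ⊆ ball (0 : EuclideanSpace ℝ (Fin N)) R := by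
        intro x hx
        rw [mem_ball_zero_iff]
        by_contra hxR
        push_neg at hxR
        have : φf ‖x‖ ≤ φf R :=
          hφfmono (mem_Ici.2 hR0) (mem_Ici.2 (norm_nonneg x)) hxR
        have : f x ≤ l := by rw [hfrad]; linarith
        exact absurd hx (by simp [this.not_gt])
      exact lt_of_le_of_lt (measure_mono hsub) measure_ball_lt_top
    · push_neg at hR
      exfalso
      have hfall : ∀ x : EuclideanSpace ℝ (Fin N), l < f x := fun x => by
        rw [hfrad]; exact hR _ (norm_nonneg x)
      -- decay of g: choose R₀ with φg r < l/2 for r ≥ R₀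
      obtain ⟨R₁, hR₁⟩ := eventually_atTop.1 (hgdecay.eventually (eventually_lt_nhds (half_pos hl)))
      set R₀ := max R₁ 0 with hR₀def
      have hR₀0 : 0 ≤ R₀ := le_max_right _ _
      have hgsmall : ∀ s : ℝ, R₀ ≤ s → φg s < l / 2 := fun s hs =>
        hR₁ s (le_trans (le_max_left _ _) hs)
      set C := ∫ x in ball (0 : EuclideanSpace ℝ (Fin N)) R₀, g x with hC
      have hC0 : 0 ≤ C := setIntegral_nonneg measurableSet_ball (fun x _ => hg_nonneg x)
      -- main estimate for any r > R₀
      have main : ∀ r : ℝ, R₀ < r → l / 2 * (volume (ball (0 : EuclideanSpace ℝ (Fin N)) r)).toReal ≤ C := by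
        intro r hr
        have hr0 : 0 < r := lt_of_le_of_lt hR₀0 hr
        set v := (volume (ball (0 : EuclideanSpace ℝ (Fin N)) r)).toReal with hv
        have hsubball : ball (0 : EuclideanSpace ℝ (Fin N)) R₀ ⊆ ball (0 : EuclideanSpace ℝ (Fin N)) r := ball_subset_ball hr.le
        -- lower bound for f
        have h1 : l * v ≤ ∫ x in ball (0 : EuclideanSpace ℝ (Fin N)) r, f x := by
          have := setIntegral_mono_on (integrableOn_const measure_ball_lt_top.ne)
            (hf_int r) measurableSet_ball (fun x _ => (hfall x).le)
          simpa [setIntegral_const, smul_eq_mul, mul_comm, Measure.real, v] using this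
        -- split g integral
        have hdiff : (∫ x in ball (0 : EuclideanSpace ℝ (Fin N)) r \ ball (0 : EuclideanSpace ℝ (Fin N)) R₀, g x) =
            (∫ x in ball (0 : EuclideanSpace ℝ (Fin N)) r, g x) - C :=
          integral_diff measurableSet_ball (hg_int r) hsubball
        have h2 : (∫ x in ball (0 : EuclideanSpace ℝ (Fin N)) r \ ball (0 : EuclideanSpace ℝ (Fin N)) R₀, g x) ≤ l / 2 * v := by
          have hint : IntegrableOn g (ball (0 : EuclideanSpace ℝ (Fin N)) r \ ball (0 : EuclideanSpace ℝ (Fin N)) R₀) volume :=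
            (hg_int r).mono_set diff_subset
          have hb := setIntegral_mono_on hint
            (integrableOn_const (C := l / 2)
              (lt_of_le_of_lt (measure_mono diff_subset) measure_ball_lt_top).ne)
            (measurableSet_ball.diff measurableSet_ball)
            (fun x hx => by
              rw [hgrad]
              have : ¬ ‖x‖ < R₀ := fun h => hx.2 (mem_ball_zero_iff.2 h)
              exact (hgsmall ‖x‖ (not_lt.1 this)).le)
          have hle : (volume (ball (0 : EuclideanSpace ℝ (Fin N)) r \ ball (0 : EuclideanSpace ℝ (Fin N)) R₀)).toReal ≤ v := by
            refine ENNReal.toReal_mono measure_ball_lt_top.ne (measure_mono diff_subset)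
          calc (∫ x in ball (0 : EuclideanSpace ℝ (Fin N)) r \ ball (0 : EuclideanSpace ℝ (Fin N)) R₀, g x)
              ≤ (volume (ball (0 : EuclideanSpace ℝ (Fin N)) r \ ball (0 : EuclideanSpace ℝ (Fin N)) R₀)).toReal * (l / 2) := by
                simpa [setIntegral_const, smul_eq_mul, Measure.real] using hb
            _ ≤ v * (l / 2) := by
                exact mul_le_mul_of_nonneg_right hle (by linarith)
            _ = l / 2 * v := by ring
        have h3 := hconc r hr0
        have h4 : (∫ x in ball (0 : EuclideanSpace ℝ (Fin N)) r, g x) ≤ C + l / 2 * v := by linarith [hdiff ▸ h2]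
        linarith
      -- choose a big radius to contradict `main`
      set r := max (R₀ + 1) (max 1 ((2 * C / l + 1) / (volume (ball (0 : EuclideanSpace ℝ (Fin N)) 1)).toReal)) with hrdef
      have hr1 : (1:ℝ) ≤ r := le_trans (le_max_left _ _) (le_max_right _ _)
      have hrR : R₀ < r := lt_of_lt_of_le (by linarith) (le_max_left _ _)
      have hrbig : (2 * C / l + 1) / (volume (ball (0 : EuclideanSpace ℝ (Fin N)) 1)).toReal ≤ r :=
        le_trans (le_max_right _ _) (le_max_right _ _)
      have hvr : (volume (ball (0 : EuclideanSpace ℝ (Fin N)) r)).toReal = r ^ N * (volume (ball (0 : EuclideanSpace ℝ (Fin N)) 1)).toReal := by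
        rw [hvol r (by linarith)]
        rw [ENNReal.toReal_mul, ENNReal.toReal_ofReal (pow_nonneg (by linarith) N)]
      have hrpow : r ≤ r ^ N := le_self_pow₀ hr1 hN.ne'
      have hge : 2 * C / l + 1 ≤ r ^ N * (volume (ball (0 : EuclideanSpace ℝ (Fin N)) 1)).toReal := by
        have := (div_le_iff₀ hv1pos).1 hrbig
        nlinarith
      have hmain := main r hrR
      rw [hvr] at hmain
      have : l / 2 * (2 * C / l + 1) ≤ C := by
        refine le_trans (mul_le_mul_of_nonneg_left hge (by linarith)) hmain
      have hexp : l / 2 * (2 * C / l + 1) = C + l / 2 := by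
        field_simp
      rw [hexp] at this
      linarith
  · -- essential sup comparison
    rw [eLpNorm_exponent_top, eLpNorm_exponent_top]
    have hupper : eLpNormEssSup f volume ≤ ENNReal.ofReal (φg 0) := by
      refine eLpNormEssSup_le_of_ae_bound (C := φg 0) (ae_of_all _ (fun x => ?_))
      rw [Real.norm_eq_abs, abs_of_nonneg (hf_nonneg x)]
      exact le_trans (hf_le_top x) key
    refine le_trans hupper ?_
    -- lower bound for essSup of g
    rcases le_or_gt (φg 0) 0 with hg0 | hg0
    · simp [ENNReal.ofReal_of_nonpos hg0]
    by_contra hcon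
    push_neg at hcon
    have hne : eLpNormEssSup g volume ≠ ⊤ := ne_top_of_lt hcon
    set Cg := (eLpNormEssSup g volume).toReal with hCg
    have hCg0 : 0 ≤ Cg := ENNReal.toReal_nonneg
    have hCglt : Cg < φg 0 := (ENNReal.lt_ofReal_iff_toReal_lt hne).1 hcon
    set c := (Cg + φg 0) / 2 with hc
    have hc1 : Cg < c := by simp only [hc]; linarith
    have hc2 : c < φg 0 := by simp only [hc]; linarith
    obtain ⟨δ, hδ, hδg⟩ := stmt19_aux_rc (hφgrc 0 le_rfl) hc2
    have hnull : ball (0 : EuclideanSpace ℝ (Fin N)) δ ⊆ {x : EuclideanSpace ℝ (Fin N) | ¬ ((‖g x‖₊ : ℝ≥0∞) ≤ eLpNormEssSup g volume)} := by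
      intro x hx
      have hgx : c < g x := by
        rw [hgrad]; exact hδg _ (norm_nonneg x) (mem_ball_zero_iff.1 hx)
      have h1 : (‖g x‖₊ : ℝ≥0∞) = ENNReal.ofReal (g x) := Real.enorm_eq_ofReal (hg_nonneg x)
      have h2 : eLpNormEssSup g volume < (‖g x‖₊ : ℝ≥0∞) := by
        rw [h1, ← ENNReal.ofReal_toReal hne, ← hCg]
        exact ENNReal.ofReal_lt_ofReal_iff_of_nonneg hCg0 |>.2 (by linarith)
      exact fun h => absurd (lt_of_lt_of_le h2 h) (lt_irrefl _)
    have := measure_mono_null hnull (ae_iff.1 (ae_le_eLpNormEssSup (f := g) (μ := volume)))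
    exact absurd this (measure_ball_pos volume 0 hδ).ne'
end
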